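/- Let N be a Petri net with a vertex cover VC of G(N). Suppose σ = σ₁'σ̲₁⋯σ_α'σ̲_α is a Y-neglecting weakly M, Q, ω-enabled X₁-pumping sequence and π = π₁'π̲₁⋯π_{α'}'π̲_{α'} is a Y₁-neglecting weakly M₁, Q, ω-enabled X₂-pumping sequence. If Y₁ = Y ∪ {p ∈ P : Δ[σ̲_λ](p) > 0 for some 1 ≤ λ ≤ α}, applying the effects of σ to M yields M₂, and M₂(p) = M₁(p) for all p ∈ Q ∖ Y₁, then the concatenation σπ = σ₁'σ̲₁⋯σ_α'σ̲_α π₁'π̲₁⋯π_{α'}'π̲_{α'} (with pumping portions σ̲₁, …, σ̲_α, π̲₁, …, π̲_{α'}) is a Y-neglecting weakly M, Q, ω-enabled (X₁ ∪ X₂)-pumping sequence. -/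

import Mathlib

open Finset

/-- A Petri net on places `P` and transitions `T`,
given by the two incidence functions. -/
structure PetriNet (P T : Type) where
  Pre : P → T → ℕ
  Post : P → T → ℕ

namespace PetriNet

variable {P T : Type}

/-- The effect of firing a single transition on the number of tokens in a place. -/
def eff (N : PetriNet P T) (t : T) (p : P) : ℤ :=
  (N.Post p t : ℤ) - (N.Pre p t : ℤ)

/-- The total effect of a sequence of transitions on a place. -/
def seqEff (N : PetriNet P T) (σ : List T) (p : P) : ℤ :=
  (σ.map fun t => N.eff t p).sum

/-- The effect on `p` of the transition at position `i` of `σ` (`0` if out of range). -/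
def effAt (N : PetriNet P T) (σ : List T) (i : ℕ) (p : P) : ℤ :=
  N.seqEff ((σ.drop i).take 1) p

/-- `W` is an upper bound for all arc weights, and `W ≥ 1`. -/
def WeightBound (N : PetriNet P T) (W : ℕ) : Prop :=
  1 ≤ W ∧ ∀ p t, N.Pre p t ≤ W ∧ N.Post p t ≤ W

/-- The firing sequence `σ` is enabled at the marking `M₀`. -/
def SeqEnabled (N : PetriNet P T) (M₀ : P → ℕ) (σ : List T) : Prop :=
  ∀ i (hi : i < σ.length) (p : P),
    (N.Pre p (σ.get ⟨i, hi⟩) : ℤ) ≤ (M₀ p : ℤ) + N.seqEff (σ.take i) p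

/-- `M₀ ⟹σ M` : firing `σ` at `M₀` yields `M`. -/
def Fires (N : PetriNet P T) (M₀ : P → ℕ) (σ : List T) (M : P → ℕ) : Prop :=
  N.SeqEnabled M₀ σ ∧ ∀ p, (M p : ℤ) = (M₀ p : ℤ) + N.seqEff σ p

/-- `M` is reachable from `M₀`. -/
def Reachable (N : PetriNet P T) (M₀ M : P → ℕ) : Prop :=
  ∃ σ : List T, N.Fires M₀ σ M

/-- Adjacency in the graph `G(N)` associated with the net. -/
def Adj (N : PetriNet P T) (p₁ p₂ : P) : Prop :=
  ∃ t, 1 ≤ N.Pre p₁ t + N.Post p₁ t ∧ 1 ≤ N.Pre p₂ t + N.Post p₂ t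

/-- `VC` is a vertex cover of `G(N)`. -/
def IsVertexCover (N : PetriNet P T) (VC : Set P) : Prop :=
  ∀ p₁ p₂, N.Adj p₁ p₂ → p₁ ∈ VC ∨ p₂ ∈ VC

/-- The two transitions have the same type (relative to the vertex cover `VC`). -/
def SameType (N : PetriNet P T) (VC : Set P) (t₁ t₂ : T) : Prop :=
  ∀ p ∈ VC, N.Pre p t₁ = N.Pre p t₂ ∧ N.Post p t₁ = N.Post p t₂

/-- The two places (both outside the vertex cover `VC`) have the same variety:
for every type of transitions and every nonzero weight `w`, some transition of that
type has effect `w` on `p₁` iff some transition of that type has effect `w` on `p₂`. -/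
def SameVariety (N : PetriNet P T) (VC : Set P) (p₁ p₂ : P) : Prop :=
  p₁ ∉ VC ∧ p₂ ∉ VC ∧
  ∀ (t : T) (w : ℤ), w ≠ 0 →
    ((∃ t', N.SameType VC t t' ∧ N.eff t' p₁ = w) ↔
     (∃ t', N.SameType VC t t' ∧ N.eff t' p₂ = w))

/-- A choice, for each variety of a place outside `VC`, of one designated
special place of that variety. -/
structure SpecialChoice (N : PetriNet P T) (VC : Set P) where
  sp : P → P
  not_mem : ∀ p, p ∉ VC → sp p ∉ VC
  variety : ∀ p, p ∉ VC → N.SameVariety VC p (sp p)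
  const : ∀ p₁ p₂, p₁ ∉ VC → p₂ ∉ VC → N.SameVariety VC p₁ p₂ → sp p₁ = sp p₂

/-- The set `S` of special places. -/
def specialSet (N : PetriNet P T) (VC : Set P) (C : N.SpecialChoice VC) : Set P :=
  VC ∪ {q | ∃ p, p ∉ VC ∧ C.sp p = q}

/-- The set `I` of independent places. -/
def indepSet (N : PetriNet P T) (VC : Set P) (C : N.SpecialChoice VC) : Set P :=
  (N.specialSet VC C)ᶜ

/-- All intermediate markings along `σ` from the integer marking `M` are
nonnegative on `Q`. -/
def QRun (N : PetriNet P T) (Q : Set P) (M : P → ℤ) (σ : List T) : Prop :=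
  ∀ i, i ≤ σ.length → ∀ q ∈ Q, 0 ≤ M q + N.seqEff (σ.take i) q

/-- `σ` is `Q`-covering from `M`, with target marking `Mcov`. -/
def QCovering (N : PetriNet P T) (Q : Set P) (Mcov : P → ℕ) (M : P → ℤ)
    (σ : List T) : Prop :=
  N.QRun Q M σ ∧ ∀ q ∈ Q, (Mcov q : ℤ) ≤ M q + N.seqEff σ q

/-- `lencov Q M Mcov` : the length of the shortest `Q`-covering sequence from `M`
(`0` if there is none). -/
noncomputable def lencov (N : PetriNet P T) (Q : Set P) (M : P → ℤ)
    (Mcov : P → ℕ) : ℕ :=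
  sInf {r | ∃ σ : List T, σ.length = r ∧ N.QCovering Q Mcov M σ}

/-- `ℓ(i)`, as an extended natural number. -/
noncomputable def ellCov (N : PetriNet P T) (VC : Set P) (C : N.SpecialChoice VC)
    (Mcov : P → ℕ) (i : ℕ) : ℕ∞ :=
  ⨆ (Q : Set P) (_ : N.indepSet VC C ⊆ Q)
    (_ : (Q \ N.indepSet VC C).ncard = i) (M : P → ℤ),
    (N.lencov Q M Mcov : ℕ∞)

/-- `σ` is a `Q`-enabled self-covering sequence from the integer marking `M`. -/
def QSelfCovering (N : PetriNet P T) (Q : Set P) (M : P → ℤ) (σ : List T) : Prop :=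
  N.QRun Q M σ ∧ ∃ r' < σ.length,
    (∀ p, M p + N.seqEff (σ.take r') p ≤ M p + N.seqEff σ p) ∧
    (fun p => M p + N.seqEff (σ.take r') p) ≠ (fun p => M p + N.seqEff σ p)

/-- `σ` is a self-covering sequence enabled at the marking `M₀`. -/
def SelfCovering (N : PetriNet P T) (M₀ : P → ℕ) (σ : List T) : Prop :=
  N.SeqEnabled M₀ σ ∧ ∃ r' < σ.length,
    (∀ p, (M₀ p : ℤ) + N.seqEff (σ.take r') p ≤ (M₀ p : ℤ) + N.seqEff σ p) ∧
    (fun p => (M₀ p : ℤ) + N.seqEff (σ.take r') p) ≠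
      (fun p => (M₀ p : ℤ) + N.seqEff σ p)

open scoped Classical in
/-- `slencov(Q, j, M)` (relative to the fixed bound `U'` and the set `Ind` of
independent places). -/
noncomputable def slencov (N : PetriNet P T) (Ind : Set P) (U' W j : ℕ)
    (Q : Set P) (M : P → ℤ) : ℕ :=
  if ∃ σ : List T, N.QSelfCovering Q M σ ∧
      ∀ i ≤ σ.length, ∀ p ∈ Ind,
        M p + N.seqEff (σ.take i) p ≤ ((U' + j * W : ℕ) : ℤ)
  then sInf {r | ∃ σ : List T, σ.length = r ∧ N.QSelfCovering Q M σ}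
  else 0

/-- `ℓ₁(i, j)`, as an extended natural number. -/
noncomputable def ell1 (N : PetriNet P T) (VC : Set P) (C : N.SpecialChoice VC)
    (U' W : ℕ) (i j : ℕ) : ℕ∞ :=
  ⨆ (Q : Set P) (_ : N.indepSet VC C ⊆ Q)
    (_ : (Q \ N.indepSet VC C).ncard = i) (M : P → ℤ),
    (N.slencov (N.indepSet VC C) U' W j Q M : ℕ∞)

/-- The transition sequence underlying a decomposition
`σ₁'σ̲₁σ₂'σ̲₂⋯σ_α'σ̲_α`, given as the list of pairs `(σ_λ', σ̲_λ)`. -/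
def decompSeq (D : List (List T × List T)) : List T :=
  (D.map fun x => x.1 ++ x.2).flatten

/-- Conditions (1)–(2) of an `X`-pumping sequence, for the list `pumps` of
pumping portions. -/
def PumpingConds (N : PetriNet P T) (X : Set P) (pumps : List (List T)) : Prop :=
  (∀ l (hl : l < pumps.length) (p : P),
      N.seqEff (pumps.get ⟨l, hl⟩) p < 0 →
      ∃ μ, ∃ hμ : μ < l, 0 < N.seqEff (pumps.get ⟨μ, hμ.trans hl⟩) p) ∧
  ∀ x ∈ X, ∃ l, ∃ hl : l < pumps.length, 0 < N.seqEff (pumps.get ⟨l, hl⟩) x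

/-- `σ` is an `X`-pumping sequence enabled at `M₀`. -/
def IsPumpingSeq (N : PetriNet P T) (M₀ : P → ℕ) (X : Set P) (σ : List T) : Prop :=
  N.SeqEnabled M₀ σ ∧
  ∃ D : List (List T × List T), decompSeq D = σ ∧ N.PumpingConds X (D.map Prod.snd)

/-- The position in `decompSeq D` just after the `μ`-th pumping portion. -/
def endPos (D : List (List T × List T)) (μ : ℕ) : ℕ :=
  (decompSeq (D.take (μ + 1))).length

/-- Position `i` of `decompSeq D` lies in the caring zone of the place `p`. -/
def InCaringZone (N : PetriNet P T) (D : List (List T × List T)) (p : P)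
    (i : ℕ) : Prop :=
  ∀ μ (hμ : μ < D.length), 0 < N.seqEff (D.get ⟨μ, hμ⟩).2 p → i ≤ endPos D μ

/-- The decomposition `D` witnesses that `decompSeq D` is a `Y`-neglecting weakly
`M, Q, c`-enabled `X`-pumping sequence (`Ind` is the set of independent places and
`c = ⊤` encodes `ω`). -/
def IsWeakPumping (N : PetriNet P T) (Ind Q Y X : Set P) (M : P → ℤ)
    (c : WithTop ℤ) (D : List (List T × List T)) : Prop :=
  (∀ l (hl : l < D.length) (p : P),
      N.seqEff (D.get ⟨l, hl⟩).2 p < 0 →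
      (∃ μ, ∃ hμ : μ < l, 0 < N.seqEff (D.get ⟨μ, hμ.trans hl⟩).2 p) ∨ p ∈ Y) ∧
  (∀ x ∈ X, x ∉ Y ∧ ∃ l, ∃ hl : l < D.length, 0 < N.seqEff (D.get ⟨l, hl⟩).2 x) ∧
  (∀ i ≤ (decompSeq D).length, ∀ q ∈ Q, q ∉ Ind →
      ((M q + N.seqEff ((decompSeq D).take i) q : ℤ) : WithTop ℤ) < c) ∧
  (∀ i ≤ (decompSeq D).length, ∀ p ∈ Q,
      M p + N.seqEff ((decompSeq D).take i) p < 0 →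
      (∃ μ, ∃ hμ : μ < D.length, endPos D μ ≤ i ∧
        0 < N.seqEff (D.get ⟨μ, hμ⟩).2 p) ∨ p ∈ Y)

open scoped Classical in
/-- `pumlen(Q, j, M, X, Y)` (relative to the fixed bound `U'` and the set `Ind`
of independent places). -/
noncomputable def pumlen (N : PetriNet P T) (Ind : Set P) (U' W j : ℕ)
    (Q : Set P) (M : P → ℤ) (X Y : Set P) : ℕ :=
  if ∃ D : List (List T × List T), N.IsWeakPumping Ind Q Y X M ⊤ D ∧
      ∀ p ∈ Ind, p ∉ Y → ∀ i ≤ (decompSeq D).length, N.InCaringZone D p i →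
        M p + N.seqEff ((decompSeq D).take i) p ≤ ((U' + j * W : ℕ) : ℤ)
  then sInf {r | ∃ D : List (List T × List T),
      (decompSeq D).length = r ∧ N.IsWeakPumping Ind Q Y X M ⊤ D}
  else 0

/-- `ℓ₂(i, j)`, as an extended natural number. -/
noncomputable def ell2 (N : PetriNet P T) (VC : Set P) (C : N.SpecialChoice VC)
    (U' W : ℕ) (i j : ℕ) : ℕ∞ :=
  ⨆ (Q : Set P) (_ : N.indepSet VC C ⊆ Q)
    (_ : (Q \ N.indepSet VC C).ncard = i) (M : P → ℤ)
    (X : Set P) (Y : Set P) (_ : X.Nonempty),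
    (N.pumlen (N.indepSet VC C) U' W j Q M X Y : ℕ∞)

/-- The sub-word of `σ` given by the set `s` of positions is safe for transfer
from the place `p`: every prefix has nonnegative total effect on `p`. -/
def SubwordSafe (N : PetriNet P T) (σ : List T) (s : Finset ℕ) (p : P) : Prop :=
  ∀ j : ℕ, 0 ≤ ∑ i ∈ s.filter (fun i => i < j), N.effAt σ i p

/-- `σ'` is obtained from `σ` by transferring the sub-word at the positions `s`
from the place `p₁` to the place `p₂`. -/
def IsTransfer (N : PetriNet P T) (VC : Set P) (p₁ p₂ : P) (σ : List T)
    (s : Finset ℕ) (σ' : List T) : Prop :=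
  σ'.length = σ.length ∧
  (∀ i ∈ s, i < σ.length) ∧
  ∀ i (hi : i < σ.length) (hi' : i < σ'.length),
    if i ∈ s then
      N.SameType VC (σ.get ⟨i, hi⟩) (σ'.get ⟨i, hi'⟩) ∧
      (N.Pre p₁ (σ.get ⟨i, hi⟩) ≠ 0 ∨ N.Post p₁ (σ.get ⟨i, hi⟩) ≠ 0) ∧
      N.Pre p₂ (σ'.get ⟨i, hi'⟩) = N.Pre p₁ (σ.get ⟨i, hi⟩) ∧
      N.Post p₂ (σ'.get ⟨i, hi'⟩) = N.Post p₁ (σ.get ⟨i, hi⟩)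
    else σ'.get ⟨i, hi'⟩ = σ.get ⟨i, hi⟩

/-- The decomposition `σ₁'σ₁^{n₁}σ̲₁σ₁^{n₁'}σ₂'⋯σ_α'σ_α^{n_α}σ̲_α` obtained from
`D` by inserting extra (non-pumping) copies of the pumping portions. -/
def replicateDecomp (D : List (List T × List T)) (n n' : ℕ → ℕ) :
    List (List T × List T) :=
  D.mapIdx fun l pr =>
    ((if l = 0 then ([] : List T)
        else (List.replicate (n' (l - 1)) (D.getD (l - 1) ([], [])).2).flatten)
       ++ pr.1 ++ (List.replicate (n l) pr.2).flatten, pr.2)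

/-! Every pumping portion of `σ` is still a pumping portion of `σπ`, and it precedes all of `π`.
So a place of `Y₁ ∖ Y` that `π` may decrease or drive negative has already been pumped by `σ`,
while on the places of `Q ∖ Y₁` the markings along `π` from `M₁` are exactly those along the
`π`-part of `σπ` from `M`. -/

lemma seqEff_append (N : PetriNet P T) (σ τ : List T) (p : P) :
    N.seqEff (σ ++ τ) p = N.seqEff σ p + N.seqEff τ p := by
  simp [seqEff]

lemma decompSeq_append (D₁ D₂ : List (List T × List T)) :
    decompSeq (D₁ ++ D₂) = decompSeq D₁ ++ decompSeq D₂ := by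
  simp [decompSeq]

lemma endPos_le_length (D : List (List T × List T)) (μ : ℕ) :
    endPos D μ ≤ (decompSeq D).length := by
  conv_rhs => rw [← List.take_append_drop (μ + 1) D, decompSeq_append, List.length_append]
  exact Nat.le_add_right _ _

lemma endPos_append_left (D₁ D₂ : List (List T × List T)) {μ : ℕ}
    (h : μ < D₁.length) : endPos (D₁ ++ D₂) μ = endPos D₁ μ := by
  rw [endPos, List.take_append_of_le_length h]
  rfl

lemma endPos_append_right (D₁ D₂ : List (List T × List T)) (μ : ℕ) :
    endPos (D₁ ++ D₂) (D₁.length + μ) = (decompSeq D₁).length + endPos D₂ μ := by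
  rw [endPos, Nat.add_assoc, List.take_length_add_append, decompSeq_append,
    List.length_append, endPos]

section Conditions

variable (N : PetriNet P T)

-- Conditions (1) and (4) of `IsWeakPumping`; `pumpedSet D` is `⋃_λ {p | Δ[σ̲_λ](p) > 0}`.

def pumpedSet (D : List (List T × List T)) : Set P :=
  {p | ∃ l, ∃ hl : l < D.length, 0 < N.seqEff (D.get ⟨l, hl⟩).2 p}

def PumpBeforeDecrease (Y : Set P) (D : List (List T × List T)) : Prop :=
  ∀ l (hl : l < D.length) (p : P),
    N.seqEff (D.get ⟨l, hl⟩).2 p < 0 →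
    (∃ μ, ∃ hμ : μ < l, 0 < N.seqEff (D.get ⟨μ, hμ.trans hl⟩).2 p) ∨ p ∈ Y

def PumpBeforeNegative (Q Y : Set P) (M : P → ℤ) (D : List (List T × List T)) : Prop :=
  ∀ i ≤ (decompSeq D).length, ∀ p ∈ Q,
    M p + N.seqEff ((decompSeq D).take i) p < 0 →
    (∃ μ, ∃ hμ : μ < D.length, endPos D μ ≤ i ∧ 0 < N.seqEff (D.get ⟨μ, hμ⟩).2 p) ∨ p ∈ Y

end Conditions

variable {N : PetriNet P T}

lemma mem_pumpedSet_append {D₁ D₂ : List (List T × List T)} {p : P} :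
    p ∈ N.pumpedSet (D₁ ++ D₂) ↔ p ∈ N.pumpedSet D₁ ∨ p ∈ N.pumpedSet D₂ := by
  constructor
  · rintro ⟨l, hl, hpos⟩
    rcases lt_or_ge l D₁.length with h | h
    · exact Or.inl ⟨l, h, by simpa [List.getElem_append_left h] using hpos⟩
    · refine Or.inr ⟨l - D₁.length, by rw [List.length_append] at hl; omega, ?_⟩
      simpa [List.getElem_append_right h] using hpos
  · rintro (⟨l, hl, hpos⟩ | ⟨l, hl, hpos⟩)
    · exact ⟨l, by rw [List.length_append]; omega, by simpa [List.getElem_append_left hl] using hpos⟩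
    · exact ⟨D₁.length + l, by rw [List.length_append]; omega, by simpa using hpos⟩

lemma PumpBeforeDecrease.append {Y : Set P} {D₁ D₂ : List (List T × List T)}
    (h₁ : N.PumpBeforeDecrease Y D₁)
    (h₂ : N.PumpBeforeDecrease (Y ∪ N.pumpedSet D₁) D₂) :
    N.PumpBeforeDecrease Y (D₁ ++ D₂) := by
  intro l hl p hneg
  rcases lt_or_ge l D₁.length with h | h
  · simp only [List.get_eq_getElem, List.getElem_append_left h] at hneg ⊢
    rcases h₁ l h p hneg with ⟨μ, hμ, hpos⟩ | hY
    · exact Or.inl ⟨μ, hμ, by simpa [List.getElem_append_left (hμ.trans h)] using hpos⟩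
    · exact Or.inr hY
  · obtain ⟨l, rfl⟩ : ∃ l', l = D₁.length + l' := ⟨l - D₁.length, by omega⟩
    have hl₂ : l < D₂.length := by rw [List.length_append] at hl; omega
    simp only [List.get_eq_getElem, List.getElem_append_right h] at hneg
    rcases h₂ l hl₂ p (by simpa using hneg) with ⟨μ, hμ, hpos⟩ | hY | ⟨μ, hμ, hpos⟩
    · exact Or.inl ⟨D₁.length + μ, by omega, by simpa using hpos⟩
    · exact Or.inr hY
    · exact Or.inl ⟨μ, by omega, by simpa [List.getElem_append_left hμ] using hpos⟩

lemma PumpBeforeNegative.append {Q Y : Set P} {M M₁ : P → ℤ}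
    {D₁ D₂ : List (List T × List T)}
    (h₁ : N.PumpBeforeNegative Q Y M D₁)
    (h₂ : N.PumpBeforeNegative Q (Y ∪ N.pumpedSet D₁) M₁ D₂)
    (hM : ∀ p ∈ Q, p ∉ Y ∪ N.pumpedSet D₁ → M p + N.seqEff (decompSeq D₁) p = M₁ p) :
    N.PumpBeforeNegative Q Y M (D₁ ++ D₂) := by
  intro i hi p hp hneg
  rw [decompSeq_append] at hi hneg
  rw [List.length_append] at hi
  rcases le_or_gt i (decompSeq D₁).length with hle | hlt
  · rw [List.take_append_of_le_length hle] at hneg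
    rcases h₁ i hle p hp hneg with ⟨μ, hμ, hend, hpos⟩ | hY
    · refine Or.inl ⟨μ, by rw [List.length_append]; omega, by rwa [endPos_append_left _ _ hμ], ?_⟩
      simpa [List.getElem_append_left hμ] using hpos
    · exact Or.inr hY
  by_cases hpY₁ : p ∈ Y ∪ N.pumpedSet D₁
  · rcases hpY₁ with hY | ⟨μ, hμ, hpos⟩
    · exact Or.inr hY
    · refine Or.inl ⟨μ, by rw [List.length_append]; omega, ?_, by simpa [List.getElem_append_left hμ] using hpos⟩
      rw [endPos_append_left _ _ hμ]
      exact (endPos_le_length D₁ μ).trans hlt.le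
  obtain ⟨j, rfl⟩ : ∃ j, i = (decompSeq D₁).length + j := ⟨i - (decompSeq D₁).length, by omega⟩
  rw [List.take_length_add_append, seqEff_append, ← add_assoc, hM p hp hpY₁] at hneg
  rcases h₂ j (by omega) p hp hneg with ⟨μ, hμ, hend, hpos⟩ | hY
  · refine Or.inl ⟨D₁.length + μ, by rw [List.length_append]; omega, ?_, by simpa using hpos⟩
    rw [endPos_append_right]
    omega
  · exact absurd hY hpY₁

lemma IsWeakPumping.append {Ind Q Y X₁ X₂ : Set P} {M M₁ : P → ℤ}
    {D₁ D₂ : List (List T × List T)}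
    (h₁ : N.IsWeakPumping Ind Q Y X₁ M ⊤ D₁)
    (h₂ : N.IsWeakPumping Ind Q (Y ∪ N.pumpedSet D₁) X₂ M₁ ⊤ D₂)
    (hM : ∀ p ∈ Q, p ∉ Y ∪ N.pumpedSet D₁ → M p + N.seqEff (decompSeq D₁) p = M₁ p) :
    N.IsWeakPumping Ind Q Y (X₁ ∪ X₂) M ⊤ (D₁ ++ D₂) := by
  obtain ⟨hdec₁, hX₁, -, hneg₁⟩ := h₁
  obtain ⟨hdec₂, hX₂, -, hneg₂⟩ := h₂
  refine ⟨PumpBeforeDecrease.append hdec₁ hdec₂, ?_, fun _ _ _ _ _ => WithTop.coe_lt_top _,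
    PumpBeforeNegative.append hneg₁ hneg₂ hM⟩
  rintro x (hx | hx)
  · exact ⟨(hX₁ x hx).1, mem_pumpedSet_append.2 (Or.inl (hX₁ x hx).2)⟩
  · exact ⟨fun hY => (hX₂ x hx).1 (Or.inl hY), mem_pumpedSet_append.2 (Or.inr (hX₂ x hx).2)⟩

theorem weak_pumping_concat_general {P T : Type}
    (N : PetriNet P T)
    (VC : Set P) (C : N.SpecialChoice VC)
    (Q Y X₁ X₂ : Set P)
    (M M₁ : P → ℤ) (D₁ D₂ : List (List T × List T))
    (h₁ : N.IsWeakPumping (N.indepSet VC C) Q Y X₁ M ⊤ D₁)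
    (Y₁ : Set P)
    (hY₁ : Y₁ = Y ∪ {p | ∃ l, ∃ hl : l < D₁.length,
      0 < N.seqEff (D₁.get ⟨l, hl⟩).2 p})
    (h₂ : N.IsWeakPumping (N.indepSet VC C) Q Y₁ X₂ M₁ ⊤ D₂)
    (hM : ∀ p ∈ Q, p ∉ Y₁ → M p + N.seqEff (decompSeq D₁) p = M₁ p) :
    N.IsWeakPumping (N.indepSet VC C) Q Y (X₁ ∪ X₂) M ⊤ (D₁ ++ D₂) := by
  subst hY₁
  exact h₁.append h₂ hM

/-- Concatenation of weakly enabled pumping sequences. -/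
theorem weak_pumping_concat {P T : Type} [Fintype P] [Fintype T]
    (N : PetriNet P T) (W : ℕ) (hW : N.WeightBound W)
    (VC : Set P) (hVC : N.IsVertexCover VC) (C : N.SpecialChoice VC)
    (Q Y X₁ X₂ : Set P) (hQ : N.indepSet VC C ⊆ Q)
    (hX₁ : X₁.Nonempty) (hX₂ : X₂.Nonempty)
    (M M₁ : P → ℤ) (D₁ D₂ : List (List T × List T))
    (h₁ : N.IsWeakPumping (N.indepSet VC C) Q Y X₁ M ⊤ D₁)
    (Y₁ : Set P)
    (hY₁ : Y₁ = Y ∪ {p | ∃ l, ∃ hl : l < D₁.length,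
      0 < N.seqEff (D₁.get ⟨l, hl⟩).2 p})
    (h₂ : N.IsWeakPumping (N.indepSet VC C) Q Y₁ X₂ M₁ ⊤ D₂)
    (hM : ∀ p ∈ Q, p ∉ Y₁ → M p + N.seqEff (decompSeq D₁) p = M₁ p) :
    N.IsWeakPumping (N.indepSet VC C) Q Y (X₁ ∪ X₂) M ⊤ (D₁ ++ D₂) :=
  weak_pumping_concat_general N VC C Q Y X₁ X₂ M M₁ D₁ D₂ h₁ Y₁ hY₁ h₂ hM

end PetriNet
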